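/- Let G(x,q) = ∑_{s≥0} q^{s(s+1)} x^{2s} / (q;q)_s. Then G satisfies the q-difference equation G(x,q) = (1 + x²q² + x²q³) G(xq, q) − x⁴q⁷ G(xq², q). -/

import Mathlib

/-! Comparing coefficients of `x^{2s+4}`, the equation is a recurrence between three consecutive
even coefficients of `G`; after writing `1/(q;q)_s` and `1/(q;q)_{s+1}` as multiples of
`1/(q;q)_{s+2}` it becomes a polynomial identity in `q`. Odd coefficients vanish on both sides. -/

open Finset PowerSeries

/-- `(q;q)_n = ∏_{0 ≤ j < n} (1 - q^{j+1})`. -/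
noncomputable def qPoch (n : ℕ) : PowerSeries ℚ :=
  ∏ j ∈ Finset.range n, (1 - (PowerSeries.X : PowerSeries ℚ) ^ (j + 1))

/-- The power series `q` in `ℚ⟦q⟧`. -/
noncomputable def qq : PowerSeries ℚ := PowerSeries.X

/-- `G(x,q) = ∑_{s ≥ 0} q^{s(s+1)} x^{2s} / (q;q)_s`, as an element of `ℚ⟦q⟧⟦x⟧`:
the coefficient of `x^n` is `q^{s(s+1)}/(q;q)_s` if `n = 2s`, and `0` otherwise. -/
noncomputable def Gser : PowerSeries (PowerSeries ℚ) :=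
  PowerSeries.mk fun n =>
    if 2 ∣ n then qq ^ ((n / 2) * (n / 2 + 1)) * (qPoch (n / 2))⁻¹ else 0

/-- The coefficient `f_n` of `x^n` in
`F(x,q) = ∑_{s,t,u ≥ 0} q^{s(s+1)/2 + t(t+1) + 3u(u+1)/2 + st + su + 2tu}
  x^{s+2t+3u}/((q;q)_s (q;q)_t (q;q)_u)`,
i.e. the (finite) sum over `s, t, u ≥ 0` with `s + 2t + 3u = n`. -/
noncomputable def fcoef (n : ℕ) : PowerSeries ℚ :=
  ∑ t ∈ Finset.range (n / 2 + 1), ∑ u ∈ Finset.range (n / 3 + 1),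
    if 2 * t + 3 * u ≤ n then
      qq ^ ((n - 2 * t - 3 * u) * (n - 2 * t - 3 * u + 1) / 2 + t * (t + 1) +
            3 * (u * (u + 1) / 2) + (n - 2 * t - 3 * u) * t +
            (n - 2 * t - 3 * u) * u + 2 * t * u) *
        (qPoch (n - 2 * t - 3 * u))⁻¹ * (qPoch t)⁻¹ * (qPoch u)⁻¹
    else 0

/-- `F(x,q)` as an element of `ℚ⟦q⟧⟦x⟧`. -/
noncomputable def Fser : PowerSeries (PowerSeries ℚ) :=
  PowerSeries.mk fcoef


lemma qPoch_succ (n : ℕ) : qPoch (n + 1) = qPoch n * (1 - X ^ (n + 1)) :=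
  prod_range_succ _ n

lemma inv_qPoch_eq_mul_inv_qPoch_succ (n : ℕ) :
    (qPoch n)⁻¹ = (1 - X ^ (n + 1)) * (qPoch (n + 1))⁻¹ := by
  rw [qPoch_succ, PowerSeries.mul_inv_rev, ← mul_assoc,
    PowerSeries.mul_inv_cancel _ (by simp), one_mul]

lemma coeff_C_mul_X_pow_mul_rescale {R : Type*} [CommRing R] (a c : R) (f : R⟦X⟧) (k n : ℕ) :
    coeff n (C a * X ^ k * rescale c f) =
      if k ≤ n then a * c ^ (n - k) * coeff (n - k) f else 0 := by
  rw [mul_comm (C a), mul_assoc, coeff_X_pow_mul']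
  split_ifs <;> simp [coeff_rescale, mul_assoc]

lemma coeff_Gser_two_mul (s : ℕ) : coeff (2 * s) Gser = qq ^ (s * (s + 1)) * (qPoch s)⁻¹ := by
  simp [Gser]

lemma coeff_Gser_of_odd {n : ℕ} (hn : Odd n) : coeff n Gser = 0 := by
  simp [Gser, Nat.not_even_iff_odd.mpr hn, ← even_iff_two_dvd]

lemma coeff_Gser_two :
    coeff 2 Gser = qq ^ 2 * coeff 2 Gser + (qq ^ 2 + qq ^ 3) * coeff 0 Gser := by
  rw [show 2 = 2 * 1 from rfl, ← mul_zero 2, coeff_Gser_two_mul, coeff_Gser_two_mul,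
    inv_qPoch_eq_mul_inv_qPoch_succ 0, qq]
  ring

lemma coeff_Gser_recurrence (s : ℕ) :
    coeff (2 * (s + 2)) Gser =
      qq ^ (2 * (s + 2)) * coeff (2 * (s + 2)) Gser +
        (qq ^ 2 + qq ^ 3) * qq ^ (2 * (s + 1)) * coeff (2 * (s + 1)) Gser -
          qq ^ 7 * (qq ^ 2) ^ (2 * s) * coeff (2 * s) Gser := by
  simp only [coeff_Gser_two_mul]
  rw [inv_qPoch_eq_mul_inv_qPoch_succ s, inv_qPoch_eq_mul_inv_qPoch_succ (s + 1), qq]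
  ring

/-- `G(x,q) = (1 + x²q² + x²q³) G(xq,q) - x⁴q⁷ G(xq²,q)`;
the substitution `x ↦ xq` is `PowerSeries.rescale q`. -/
theorem G_q_difference :
    Gser = (1 + PowerSeries.C (qq ^ 2 + qq ^ 3) * PowerSeries.X ^ 2) *
          PowerSeries.rescale qq Gser -
        PowerSeries.C (qq ^ 7) * PowerSeries.X ^ 4 *
          PowerSeries.rescale (qq ^ 2) Gser := by
  rw [add_mul, one_mul]
  ext n : 1
  rw [map_sub, map_add, coeff_rescale, coeff_C_mul_X_pow_mul_rescale,
    coeff_C_mul_X_pow_mul_rescale]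
  rcases Nat.even_or_odd n with ⟨s, rfl⟩ | hn
  · rw [← two_mul]
    rcases s with _ | _ | s
    · simp
    · simpa using coeff_Gser_two
    · rw [if_pos (by omega), if_pos (by omega), show 2 * (s + 2) - 2 = 2 * (s + 1) by omega,
        show 2 * (s + 2) - 4 = 2 * s by omega]
      exact coeff_Gser_recurrence s
  · have hodd {k : ℕ} (hk : k ≤ n) (hev : Even k) : coeff (n - k) Gser = 0 :=
      coeff_Gser_of_odd (Nat.Odd.sub_even hk hn hev)
    simp +contextual [coeff_Gser_of_odd hn, hodd, (by decide : Even 4)]
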